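/- Let (Y, ζ) be a metric space and μ a Borel measure on Y which is globally doubling: there is C_D such that 0 < μ(B(x,2r)) ≤ C_D μ(B(x,r)) < ∞ for all x ∈ Y and r > 0, where B(x,r) denotes the open ball. Let p : (0,∞) × Y × Y → [0,∞) be continuous and satisfy the Gaussian bound p_t(x,y) ≤ C₀ exp(−c₀ ζ(x,y)²/t) / μ(B(x,√t)) for all t > 0 and x, y ∈ Y, with constants C₀, c₀ > 0. Then for every 0 < a < b < ∞ there is a constant C = C(C_D, C₀, c₀, a, b) such that for every g ∈ L¹(Y, μ): ∫_Y ∫_Y sup_{a ≤ t ≤ b} p_t(x,y) · |g(y)| dμ(y) dμ(x) ≤ C ‖g‖_{L¹(Y,μ)}. -/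

import Mathlib

open MeasureTheory

lemma meas_ball_meas {Y : Type*} [MetricSpace Y] [MeasurableSpace Y] [BorelSpace Y]
    (μ : Measure Y) (r : ℝ) : Measurable fun x => μ (Metric.ball x r) := by
  rcases le_or_gt r 0 with hr | hr
  · have : ∀ x : Y, Metric.ball x r = ∅ := fun x => Metric.ball_eq_empty.2 hr
    simp only [this, measure_empty]; exact measurable_const
  · apply LowerSemicontinuous.measurable
    intro x c hc
    have hkey : Metric.ball x r = ⋃ n : ℕ, Metric.ball x (r - r / (n + 2)) := by
      apply Set.Subset.antisymm
      · intro y hy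
        have hy' : dist y x < r := hy
        obtain ⟨n, hn⟩ := exists_nat_gt (r / (r - dist y x))
        refine Set.mem_iUnion.2 ⟨n, ?_⟩
        have hε : 0 < r - dist y x := by linarith
        have h1 : r / (r - dist y x) < (n : ℝ) + 2 := by linarith
        have h2 : r / ((n : ℝ) + 2) < r - dist y x := by
          rw [div_lt_iff₀ (by positivity)]
          calc r = (r / (r - dist y x)) * (r - dist y x) := by field_simp
          _ < ((n : ℝ) + 2) * (r - dist y x) := by
              exact mul_lt_mul_of_pos_right h1 hε
          _ = (r - dist y x) * ((n : ℝ) + 2) := by ring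
        simp only [Metric.mem_ball]
        linarith
      · refine Set.iUnion_subset fun n => Metric.ball_subset_ball ?_
        have : 0 ≤ r / ((n : ℝ) + 2) := by positivity
        linarith
    have hmono : Monotone fun n : ℕ => Metric.ball x (r - r / (n + 2)) := by
      intro m n hmn
      apply Metric.ball_subset_ball
      have : r / ((n : ℝ) + 2) ≤ r / ((m : ℝ) + 2) := by
        apply div_le_div_of_nonneg_left hr.le (by positivity)
        have : (m : ℝ) ≤ (n : ℝ) := Nat.cast_le.2 hmn
        linarith
      linarith
    have := Directed.measure_iUnion (μ := μ) (s := fun n : ℕ => Metric.ball x (r - r / (n + 2)))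
      hmono.directed_le
    simp only [] at hc
    rw [show μ (Metric.ball x r) = ⨆ n : ℕ, μ (Metric.ball x (r - r / (n + 2))) from by
      rw [hkey]; exact this] at hc
    obtain ⟨n, hn⟩ := lt_iSup_iff.1 hc
    have hδ : 0 < r / ((n : ℝ) + 2) := by positivity
    filter_upwards [Metric.ball_mem_nhds x hδ] with x' hx'
    refine hn.trans_le (measure_mono ?_)
    intro z hz
    have h1 : dist z x < r - r / (n + 2) := hz
    have hxx' : dist x' x < r / (n + 2) := hx'
    have h2 : dist z x' < r := by
      calc dist z x' ≤ dist z x + dist x x' := dist_triangle _ _ _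
      _ < r := by rw [dist_comm x x']; linarith
    exact h2

lemma iter_doub' {Y : Type*} [MetricSpace Y] [MeasurableSpace Y]
    (μ : Measure Y) (C_D : ℝ)
    (hdoub : ∀ (x : Y) (r : ℝ), 0 < r →
      μ (Metric.ball x (2 * r)) ≤ ENNReal.ofReal C_D * μ (Metric.ball x r))
    (x : Y) (s : ℝ) (hs : 0 < s) :
    ∀ m : ℕ, μ (Metric.ball x (2 ^ m * s)) ≤ ENNReal.ofReal C_D ^ m * μ (Metric.ball x s) := by
  intro m
  induction m with
  | zero => simp
  | succ n ih =>
    have h1 : (2 : ℝ) ^ (n + 1) * s = 2 * (2 ^ n * s) := by ring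
    rw [h1]
    calc μ (Metric.ball x (2 * (2 ^ n * s)))
        ≤ ENNReal.ofReal C_D * μ (Metric.ball x (2 ^ n * s)) :=
          hdoub x (2 ^ n * s) (by positivity)
      _ ≤ ENNReal.ofReal C_D * (ENNReal.ofReal C_D ^ n * μ (Metric.ball x s)) :=
          mul_le_mul_right ih _
      _ = ENNReal.ofReal C_D ^ (n + 1) * μ (Metric.ball x s) := by ring

lemma core_kernel {Y : Type*} [MetricSpace Y] [MeasurableSpace Y] [BorelSpace Y]
    (μ : Measure Y) (C_D : ℝ)
    (hdoub : ∀ (x : Y) (r : ℝ), 0 < r →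
      μ (Metric.ball x (2 * r)) ≤ ENNReal.ofReal C_D * μ (Metric.ball x r))
    (hpos : ∀ (x : Y) (r : ℝ), 0 < r → 0 < μ (Metric.ball x r))
    (hfin : ∀ (x : Y) (r : ℝ), 0 < r → μ (Metric.ball x r) < ⊤)
    (C₀ γ s : ℝ) (hC₀ : 0 < C₀) (hγ : 0 < γ) (hs : 0 < s) (hCD1 : 1 ≤ C_D) :
    ∃ C' : ℝ, 0 < C' ∧ ∀ y : Y,
      (∫⁻ x, ENNReal.ofReal (C₀ * Real.exp (-(γ * (dist x y) ^ 2))) / μ (Metric.ball x s) ∂μ)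
        ≤ ENNReal.ofReal C' := by
  set β := γ * s ^ 2 / 4 with hβdef
  have hβ : 0 < β := by positivity
  set u : ℕ → ℝ := fun k => C₀ * Real.exp β * Real.exp (-β * 4 ^ k) * C_D ^ (2 * k + 1)
    with hudef
  have hCD0 : (0 : ℝ) < C_D := lt_of_lt_of_le one_pos hCD1
  have hu_nn : ∀ k, 0 ≤ u k := fun k => by positivity
  have hu_sum : Summable u := by
    have h1 : Summable (fun k : ℕ => (C_D ^ 2) ^ k * Real.exp (-β * 4 ^ k)) := by
      apply summable_of_ratio_norm_eventually_le (r := 1/2) (by norm_num)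
      have h4 : Filter.Tendsto (fun k : ℕ => (4 : ℝ) ^ k) Filter.atTop Filter.atTop :=
        tendsto_pow_atTop_atTop_of_one_lt (by norm_num)
      have h3 : Filter.Tendsto (fun k : ℕ => 3 * β * (4 : ℝ) ^ k) Filter.atTop Filter.atTop :=
        h4.const_mul_atTop (by positivity)
      have hexp : Filter.Tendsto (fun k : ℕ => C_D ^ 2 * Real.exp (-(3 * β * 4 ^ k)))
          Filter.atTop (nhds (C_D ^ 2 * 0)) :=
        Filter.Tendsto.const_mul _ ((Real.tendsto_exp_neg_atTop_nhds_zero).comp h3)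
      rw [mul_zero] at hexp
      filter_upwards [hexp.eventually_lt_const (by norm_num : (0:ℝ) < 1/2)] with k hk
      have hnn : ∀ j : ℕ, 0 ≤ (C_D ^ 2) ^ j * Real.exp (-β * 4 ^ j) := fun j => by positivity
      rw [Real.norm_of_nonneg (hnn _), Real.norm_of_nonneg (hnn _)]
      have hsplit : (C_D ^ 2) ^ (k+1) * Real.exp (-β * 4 ^ (k+1))
          = (C_D ^ 2 * Real.exp (-(3 * β * 4 ^ k))) * ((C_D ^ 2) ^ k * Real.exp (-β * 4 ^ k)) := by
        rw [pow_succ, mul_comm ((C_D ^ 2)^k) (C_D ^ 2), mul_assoc, mul_assoc]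
        congr 1
        rw [mul_comm (Real.exp _), mul_assoc]
        congr 1
        rw [← Real.exp_add]
        congr 1
        have : (4:ℝ) ^ (k+1) = 4 * 4 ^ k := by rw [pow_succ]; ring
        rw [this]; ring
      rw [hsplit]
      exact mul_le_mul_of_nonneg_right hk.le (hnn k)
    have h2 : u = fun k => (C₀ * Real.exp β * C_D) * ((C_D ^ 2) ^ k * Real.exp (-β * 4 ^ k)) := by
      funext k
      have : C_D ^ (2 * k + 1) = (C_D ^ 2) ^ k * C_D := by rw [pow_succ, pow_mul]
      rw [hudef]; simp only []; rw [this]; ring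
    rw [h2]
    exact (h1.mul_left _)
  refine ⟨∑' k, u k + 1, by have : 0 ≤ ∑' k, u k := tsum_nonneg hu_nn; linarith, fun y => ?_⟩
  set D := ENNReal.ofReal C_D with hDdef
  have hD0 : D ≠ 0 := by
    rw [hDdef]; simpa using lt_of_lt_of_le one_pos hCD1
  have hDt : D ≠ ⊤ := ENNReal.ofReal_ne_top
  set my := μ (Metric.ball y s) with hmydef
  have hmy0 : my ≠ 0 := (hpos y s hs).ne'
  have hmyt : my ≠ ⊤ := (hfin y s hs).ne
  -- annuli
  set A : ℕ → Set Y := fun k => Nat.rec (Metric.ball y s)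
    (fun j _ => Metric.ball y (2 ^ (j + 1) * s) \ Metric.ball y (2 ^ j * s)) k with hAdef
  have hA0 : A 0 = Metric.ball y s := rfl
  have hAsucc : ∀ j, A (j + 1) = Metric.ball y (2 ^ (j + 1) * s) \ Metric.ball y (2 ^ j * s) :=
    fun j => rfl
  have hAsub : ∀ k, A k ⊆ Metric.ball y (2 ^ k * s) := by
    intro k
    cases k with
    | zero => rw [hA0]; simpa using Metric.ball_subset_ball (by linarith)
    | succ j => rw [hAsucc]; exact Set.diff_subset
  have hAmeas : ∀ k, MeasurableSet (A k) := by
    intro k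
    cases k with
    | zero => exact Metric.isOpen_ball.measurableSet
    | succ j =>
      exact (Metric.isOpen_ball.measurableSet).diff Metric.isOpen_ball.measurableSet
  have hAdisj : Pairwise (Function.onFun Disjoint A) := by
    have key : ∀ i j : ℕ, i < j → Disjoint (A i) (A j) := by
      intro i j hij
      obtain ⟨j', rfl⟩ : ∃ j', j = j' + 1 := ⟨j - 1, by omega⟩
      rw [Set.disjoint_left]
      intro x hxi hxj
      rw [hAsucc] at hxj
      apply hxj.2
      refine Metric.ball_subset_ball ?_ (hAsub i hxi)
      have h2 : (2:ℝ) ^ i ≤ 2 ^ j' := pow_le_pow_right₀ (by norm_num) (by omega)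
      nlinarith
    intro i j hij
    rcases hij.lt_or_gt with h | h
    · exact key i j h
    · exact (key j i h).symm
  have hAcover : (⋃ k, A k) = Set.univ := by
    apply Set.eq_univ_of_forall
    intro x
    have hex : ∃ n : ℕ, dist x y < 2 ^ n * s := by
      obtain ⟨n, hn⟩ := pow_unbounded_of_one_lt (dist x y / s) (by norm_num : (1:ℝ) < 2)
      exact ⟨n, by rw [div_lt_iff₀ hs] at hn; linarith⟩
    set n := Nat.find hex with hndef
    have hn : dist x y < 2 ^ n * s := Nat.find_spec hex
    rw [Set.mem_iUnion]
    cases hn' : n with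
    | zero =>
      refine ⟨0, ?_⟩
      rw [hA0, Metric.mem_ball]
      rw [hn'] at hn; simpa using hn
    | succ m =>
      refine ⟨m + 1, ?_⟩
      rw [hAsucc]
      constructor
      · rw [Metric.mem_ball]; rw [hn'] at hn; exact hn
      · rw [Metric.mem_ball]
        push_neg
        have := Nat.find_min hex (m := m) (by omega)
        push_neg at this
        exact this
  -- per annulus bound
  have hbound : ∀ k : ℕ,
      (∫⁻ x in A k, ENNReal.ofReal (C₀ * Real.exp (-(γ * (dist x y) ^ 2)))
        / μ (Metric.ball x s) ∂μ) ≤ ENNReal.ofReal (u k) := by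
    intro k
    set Nk : ENNReal := ENNReal.ofReal (C₀ * Real.exp β * Real.exp (-β * 4 ^ k)) with hNkdef
    have hstep1 : ∀ x ∈ A k,
        ENNReal.ofReal (C₀ * Real.exp (-(γ * (dist x y) ^ 2))) / μ (Metric.ball x s)
          ≤ Nk * D ^ (k + 1) / my := by
      intro x hx
      have hd_ub : dist x y < 2 ^ k * s := hAsub k hx
      have hexp : Real.exp (-(γ * (dist x y) ^ 2)) ≤ Real.exp β * Real.exp (-β * 4 ^ k) := by
        cases k with
        | zero =>
          rw [← Real.exp_add]
          have h1 : Real.exp (-(γ * dist x y ^ 2)) ≤ Real.exp 0 :=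
            Real.exp_le_exp.2 (by nlinarith [dist_nonneg (x := x) (y := y)])
          have h2 : β + -β * 4 ^ (0:ℕ) = 0 := by norm_num
          rw [h2]; exact h1
        | succ j =>
          have hd_lb : 2 ^ j * s ≤ dist x y := by
            rw [hAsucc] at hx
            have := hx.2
            rw [Metric.mem_ball] at this
            linarith [not_lt.1 this]
          have hq : β * 4 ^ (j+1) ≤ γ * dist x y ^ 2 := by
            have h4 : (4:ℝ) ^ (j+1) = 4 * ((2:ℝ) ^ j) ^ 2 := by
              have h24 : ((2:ℝ) ^ j) ^ 2 = 4 ^ j := by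
                rw [← pow_mul, mul_comm j 2, pow_mul]; norm_num
              rw [h24, pow_succ]; ring
            have hds : (2 ^ j * s) ^ 2 ≤ dist x y ^ 2 := by
              apply sq_le_sq' _ hd_lb
              nlinarith [pow_pos (show (0:ℝ) < 2 by norm_num) j]
            calc β * 4 ^ (j+1) = γ * (2 ^ j * s) ^ 2 := by rw [h4, hβdef]; ring
              _ ≤ γ * dist x y ^ 2 := by nlinarith
          calc Real.exp (-(γ * dist x y ^ 2)) ≤ Real.exp (-β * 4 ^ (j+1)) :=
                Real.exp_le_exp.2 (by linarith)
            _ ≤ Real.exp β * Real.exp (-β * 4 ^ (j+1)) := by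
                nlinarith [Real.one_le_exp hβ.le, Real.exp_pos (-β * 4 ^ (j+1))]
      have hball : Metric.ball y s ⊆ Metric.ball x (2 ^ (k + 1) * s) := by
        intro z hz
        rw [Metric.mem_ball] at hz ⊢
        have h2k : (1:ℝ) ≤ 2 ^ k := one_le_pow₀ (by norm_num : (1:ℝ) ≤ 2)
        have : (2:ℝ) ^ (k+1) = 2 * 2 ^ k := by rw [pow_succ]; ring
        calc dist z x ≤ dist z y + dist y x := dist_triangle _ _ _
          _ < s + 2 ^ k * s := by rw [dist_comm y x]; nlinarith
          _ ≤ 2 ^ (k+1) * s := by rw [this]; nlinarith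
      have hmeasb : my ≤ D ^ (k + 1) * μ (Metric.ball x s) := by
        calc my ≤ μ (Metric.ball x (2 ^ (k + 1) * s)) := measure_mono hball
          _ ≤ D ^ (k + 1) * μ (Metric.ball x s) := iter_doub' μ C_D hdoub x s hs (k + 1)
      have hDk0 : D ^ (k + 1) ≠ 0 := pow_ne_zero _ hD0
      have hDkt : D ^ (k + 1) ≠ ⊤ := ENNReal.pow_ne_top hDt
      calc ENNReal.ofReal (C₀ * Real.exp (-(γ * (dist x y) ^ 2))) / μ (Metric.ball x s)
          ≤ Nk / μ (Metric.ball x s) := by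
            apply ENNReal.div_le_div _ le_rfl
            apply ENNReal.ofReal_le_ofReal
            calc C₀ * Real.exp (-(γ * dist x y ^ 2))
                ≤ C₀ * (Real.exp β * Real.exp (-β * 4 ^ k)) := by nlinarith
              _ = C₀ * Real.exp β * Real.exp (-β * 4 ^ k) := by ring
        _ = D ^ (k + 1) * Nk / (D ^ (k + 1) * μ (Metric.ball x s)) :=
            (ENNReal.mul_div_mul_left _ _ hDk0 hDkt).symm
        _ ≤ D ^ (k + 1) * Nk / my := ENNReal.div_le_div le_rfl hmeasb
        _ = Nk * D ^ (k + 1) / my := by rw [mul_comm]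
    calc (∫⁻ x in A k, ENNReal.ofReal (C₀ * Real.exp (-(γ * (dist x y) ^ 2)))
          / μ (Metric.ball x s) ∂μ)
        ≤ ∫⁻ _ in A k, Nk * D ^ (k + 1) / my ∂μ := setLIntegral_mono' (hAmeas k) hstep1
      _ = Nk * D ^ (k + 1) / my * μ (A k) := setLIntegral_const _ _
      _ ≤ Nk * D ^ (k + 1) / my * (D ^ k * my) := by
          apply mul_le_mul_right
          calc μ (A k) ≤ μ (Metric.ball y (2 ^ k * s)) := measure_mono (hAsub k)
            _ ≤ D ^ k * my := iter_doub' μ C_D hdoub y s hs k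
      _ = Nk * D ^ (k + 1) * D ^ k := by
          rw [mul_comm (D ^ k) my, ← mul_assoc, ENNReal.div_mul_cancel hmy0 hmyt]
      _ = ENNReal.ofReal (u k) := by
          rw [hNkdef, hudef]
          simp only []
          rw [mul_assoc, ← pow_add]
          have hpw : k + 1 + k = 2 * k + 1 := by omega
          rw [hpw, hDdef, ← ENNReal.ofReal_pow hCD0.le, ← ENNReal.ofReal_mul (by positivity)]
  calc (∫⁻ x, ENNReal.ofReal (C₀ * Real.exp (-(γ * (dist x y) ^ 2))) / μ (Metric.ball x s) ∂μ)
      = ∫⁻ x in ⋃ k, A k, ENNReal.ofReal (C₀ * Real.exp (-(γ * (dist x y) ^ 2)))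
          / μ (Metric.ball x s) ∂μ := by rw [hAcover, setLIntegral_univ]
    _ = ∑' k, ∫⁻ x in A k, ENNReal.ofReal (C₀ * Real.exp (-(γ * (dist x y) ^ 2)))
          / μ (Metric.ball x s) ∂μ := lintegral_iUnion hAmeas hAdisj _
    _ ≤ ∑' k, ENNReal.ofReal (u k) := ENNReal.tsum_le_tsum hbound
    _ = ENNReal.ofReal (∑' k, u k) := (ENNReal.ofReal_tsum_of_nonneg hu_nn hu_sum).symm
    _ ≤ ENNReal.ofReal (∑' k, u k + 1) := ENNReal.ofReal_le_ofReal (by linarith)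

lemma doubling_secondCountable {Y : Type*} [MetricSpace Y] [MeasurableSpace Y] [BorelSpace Y]
    (μ : Measure Y) (C_D : ℝ)
    (hdoub : ∀ (x : Y) (r : ℝ), 0 < r →
      μ (Metric.ball x (2 * r)) ≤ ENNReal.ofReal C_D * μ (Metric.ball x r))
    (hpos : ∀ (x : Y) (r : ℝ), 0 < r → 0 < μ (Metric.ball x r))
    (hfin : ∀ (x : Y) (r : ℝ), 0 < r → μ (Metric.ball x r) < ⊤)
    (x₀ : Y) : SecondCountableTopology Y := by
  classical
  set D := ENNReal.ofReal C_D with hDdef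
  have hnet : ∀ (R ε : ℝ), 0 < R → 0 < ε →
      ∃ t : Finset Y, ∀ x ∈ Metric.ball x₀ R, ∃ y ∈ t, dist x y < ε := by
    intro R ε hR hε
    set ε' := ε / 2 with hε'def
    have hε' : 0 < ε' := by positivity
    obtain ⟨m, hm⟩ := pow_unbounded_of_one_lt (2 * R / ε') (by norm_num : (1:ℝ) < 2)
    have hm' : 2 * R ≤ 2 ^ m * ε' := by
      rw [div_lt_iff₀ hε'] at hm
      linarith
    set δ : ENNReal := μ (Metric.ball x₀ R) / D ^ m with hδdef
    have hδ0 : δ ≠ 0 :=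
      (ENNReal.div_pos (hpos x₀ R hR).ne' (ENNReal.pow_ne_top ENNReal.ofReal_ne_top)).ne'
    set M : ENNReal := μ (Metric.ball x₀ (R + ε')) with hMdef
    have hMt : M ≠ ⊤ := (hfin x₀ (R + ε') (by positivity)).ne
    set N : ℕ := ⌈(M / δ).toReal⌉₊ with hNdef
    -- the property of being an ε-separated subset of the ball
    set P : Finset Y → Prop :=
      fun t => ↑t ⊆ Metric.ball x₀ R ∧ (t : Set Y).Pairwise fun u v => ε ≤ dist u v with hPdef
    have hlow : ∀ y ∈ Metric.ball x₀ R, δ ≤ μ (Metric.ball y ε') := by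
      intro y hy
      have hsub : Metric.ball x₀ R ⊆ Metric.ball y (2 ^ m * ε') := by
        intro z hz
        rw [Metric.mem_ball] at hz hy ⊢
        calc dist z y ≤ dist z x₀ + dist x₀ y := dist_triangle _ _ _
          _ < R + R := by rw [dist_comm x₀ y]; linarith
          _ ≤ 2 ^ m * ε' := by linarith
      have h1 : μ (Metric.ball x₀ R) ≤ μ (Metric.ball y ε') * D ^ m := by
        calc μ (Metric.ball x₀ R) ≤ μ (Metric.ball y (2 ^ m * ε')) := measure_mono hsub
          _ ≤ D ^ m * μ (Metric.ball y ε') := iter_doub' μ C_D hdoub y ε' hε' m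
          _ = μ (Metric.ball y ε') * D ^ m := mul_comm _ _
      exact ENNReal.div_le_of_le_mul h1
    have hcard : ∀ t : Finset Y, P t → t.card ≤ N := by
      intro t ht
      have hdisj : (↑t : Set Y).PairwiseDisjoint fun y => Metric.ball y ε' := by
        intro u hu v hv huv
        apply Metric.ball_disjoint_ball
        have := ht.2 hu hv huv
        rw [hε'def]; linarith
      have hmb : ∀ y ∈ t, MeasurableSet (Metric.ball y ε') := fun y _ =>
        Metric.isOpen_ball.measurableSet
      have hsum : ∑ y ∈ t, μ (Metric.ball y ε') = μ (⋃ y ∈ t, Metric.ball y ε') :=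
        (measure_biUnion_finset hdisj hmb).symm
      have hsub2 : (⋃ y ∈ t, Metric.ball y ε') ⊆ Metric.ball x₀ (R + ε') := by
        intro z hz
        rw [Set.mem_iUnion₂] at hz
        obtain ⟨y, hy, hzy⟩ := hz
        have hy' : dist y x₀ < R := ht.1 hy
        rw [Metric.mem_ball] at hzy ⊢
        calc dist z x₀ ≤ dist z y + dist y x₀ := dist_triangle _ _ _
          _ < ε' + R := by linarith
          _ = R + ε' := by ring
      have hkey : (t.card : ENNReal) * δ ≤ M := by
        calc (t.card : ENNReal) * δ = t.card • δ := by rw [nsmul_eq_mul]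
          _ ≤ ∑ y ∈ t, μ (Metric.ball y ε') :=
            Finset.card_nsmul_le_sum t _ _ fun y hy => hlow y (ht.1 hy)
          _ = μ (⋃ y ∈ t, Metric.ball y ε') := hsum
          _ ≤ M := measure_mono hsub2
      have h2 : (t.card : ENNReal) ≤ M / δ :=
        (ENNReal.le_div_iff_mul_le (Or.inl hδ0) (Or.inr hMt)).2 hkey
      have h3 : (t.card : ℝ) ≤ (M / δ).toReal := by
        have := ENNReal.toReal_mono (ENNReal.div_lt_top hMt hδ0).ne h2
        simpa using this
      have h4 : (t.card : ℝ) ≤ (N : ℝ) := h3.trans (Nat.le_ceil _)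
      exact_mod_cast h4
    have hP0 : P ∅ := ⟨by simp, by simp⟩
    obtain ⟨t, hPt, hcardt⟩ :=
      Nat.findGreatest_spec (P := fun n => ∃ t : Finset Y, P t ∧ t.card = n) (m := 0)
        (Nat.zero_le N) ⟨∅, hP0, rfl⟩
    refine ⟨t, fun x hx => ?_⟩
    by_contra hcon
    push_neg at hcon
    have hxt : x ∉ t := by
      intro hxt
      have := hcon x hxt
      simp at this
      linarith
    have hPt' : P (insert x t) := by
      constructor
      · rw [Finset.coe_insert]
        exact Set.insert_subset hx hPt.1
      · rw [Finset.coe_insert]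
        apply hPt.2.insert
        intro y hy hyx
        exact ⟨hcon y hy, by rw [dist_comm]; exact hcon y hy⟩
    have hcard' : (insert x t).card = t.card + 1 :=
      Finset.card_insert_of_notMem hxt
    have hle : t.card + 1 ≤ N := hcard' ▸ hcard _ hPt'
    refine Nat.findGreatest_is_greatest (P := fun n => ∃ t : Finset Y, P t ∧ t.card = n)
      (k := t.card + 1) (n := N) ?_ hle ⟨insert x t, hPt', hcard'⟩
    rw [hcardt]
    omega
  apply Metric.secondCountable_of_almost_dense_set
  intro ε hε
  choose T hT using fun n : ℕ => hnet (n + 1 : ℝ) ε (by positivity) hε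
  refine ⟨⋃ n : ℕ, (T n : Set Y), Set.countable_iUnion (fun n => (T n).countable_toSet), ?_⟩
  intro x
  obtain ⟨n, hn⟩ := exists_nat_gt (dist x x₀)
  obtain ⟨y, hy, hxy⟩ := hT n x (by rw [Metric.mem_ball]; push_cast; linarith)
  exact ⟨y, Set.mem_iUnion.2 ⟨n, hy⟩, hxy.le⟩

theorem stmt15 {Y : Type*} [MetricSpace Y] [MeasurableSpace Y] [BorelSpace Y]
    (μ : Measure Y) (C_D : ℝ)
    (hdoub : ∀ (x : Y) (r : ℝ), 0 < r →
      μ (Metric.ball x (2 * r)) ≤ ENNReal.ofReal C_D * μ (Metric.ball x r))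
    (hpos : ∀ (x : Y) (r : ℝ), 0 < r → 0 < μ (Metric.ball x r))
    (hfin : ∀ (x : Y) (r : ℝ), 0 < r → μ (Metric.ball x r) < ⊤)
    (p : ℝ → Y → Y → ℝ)
    (hcont : ContinuousOn (fun q : ℝ × Y × Y => p q.1 q.2.1 q.2.2)
      (Set.Ioi (0 : ℝ) ×ˢ (Set.univ : Set (Y × Y))))
    (hnn : ∀ (t : ℝ) (x y : Y), 0 < t → 0 ≤ p t x y)
    (C₀ c₀ : ℝ) (hC₀ : 0 < C₀) (hc₀ : 0 < c₀)
    (hgauss : ∀ (t : ℝ) (x y : Y), 0 < t →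
      p t x y ≤ C₀ * Real.exp (-c₀ * (dist x y) ^ 2 / t) /
        (μ (Metric.ball x (Real.sqrt t))).toReal)
    (a b : ℝ) (ha : 0 < a) (hab : a < b) :
    ∃ C : ℝ, 0 < C ∧ ∀ g : Y → ℂ, Integrable g μ →
      (∫⁻ x, ∫⁻ y, ENNReal.ofReal
          ((⨆ t : Set.Icc a b, p t x y) * ‖g y‖) ∂μ ∂μ)
        ≤ ENNReal.ofReal (C * ∫ y, ‖g y‖ ∂μ) := by
  obtain hY | hY := isEmpty_or_nonempty Y
  · refine ⟨1, one_pos, fun g hg => ?_⟩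
    simp [Measure.eq_zero_of_isEmpty μ]
  obtain ⟨x₀⟩ := hY
  haveI : SecondCountableTopology Y := doubling_secondCountable μ C_D hdoub hpos hfin x₀
  have hb : 0 < b := ha.trans hab
  -- C_D ≥ 1
  have hCD1 : (1 : ℝ) ≤ C_D := by
    by_contra h
    push_neg at h
    have h1 := hdoub x₀ 1 one_pos
    have h2 : μ (Metric.ball x₀ 1) ≤ μ (Metric.ball x₀ (2 * 1)) :=
      measure_mono (Metric.ball_subset_ball (by norm_num))
    have h3 : μ (Metric.ball x₀ 1) ≤ ENNReal.ofReal C_D * μ (Metric.ball x₀ 1) := h2.trans h1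
    have h4 : ENNReal.ofReal C_D < 1 := ENNReal.ofReal_lt_one.2 h
    have h5 : ENNReal.ofReal C_D * μ (Metric.ball x₀ 1) < 1 * μ (Metric.ball x₀ 1) :=
      (mul_comm _ _).trans_lt ((ENNReal.mul_lt_mul_right (hpos x₀ 1 one_pos).ne' (hfin x₀ 1 one_pos).ne h4).trans_eq (mul_comm _ _))
    rw [one_mul] at h5
    exact absurd (h3.trans_lt h5) (lt_irrefl _)
  -- sigma-finiteness
  haveI : SigmaFinite μ := by
    refine ⟨⟨⟨fun n => Metric.ball x₀ (n + 1), fun _ => trivial,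
      fun n => hfin x₀ (n + 1) (by positivity), ?_⟩⟩⟩
    apply Set.eq_univ_of_forall
    intro x
    obtain ⟨n, hn⟩ := exists_nat_gt (dist x x₀)
    exact Set.mem_iUnion.2 ⟨n, by rw [Metric.mem_ball]; push_cast; linarith⟩
  set s := Real.sqrt a with hsdef
  have hs : 0 < s := Real.sqrt_pos.2 ha
  set γ := c₀ / b with hγdef
  have hγ : 0 < γ := by positivity
  obtain ⟨C', hC'pos, hC'⟩ := core_kernel μ C_D hdoub hpos hfin C₀ γ s hC₀ hγ hs hCD1
  refine ⟨C', hC'pos, fun g hg => ?_⟩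
  -- kernel
  set K : Y → Y → ENNReal := fun x y =>
    ENNReal.ofReal (C₀ * Real.exp (-(γ * (dist x y) ^ 2))) / μ (Metric.ball x s) with hKdef
  haveI : Nonempty (Set.Icc a b) := Set.nonempty_Icc_subtype hab.le
  have hden_pos : ∀ x : Y, 0 < (μ (Metric.ball x s)).toReal := fun x =>
    ENNReal.toReal_pos (hpos x s hs).ne' (hfin x s hs).ne
  have hpt : ∀ (x y : Y) (t : Set.Icc a b), p t x y
      ≤ C₀ * Real.exp (-(γ * (dist x y) ^ 2)) / (μ (Metric.ball x s)).toReal := by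
    rintro x y ⟨t, hta, htb⟩
    have ht : 0 < t := ha.trans_le hta
    have hden_le : (μ (Metric.ball x s)).toReal ≤ (μ (Metric.ball x (Real.sqrt t))).toReal := by
      apply (ENNReal.toReal_le_toReal (hfin x s hs).ne (hfin x (Real.sqrt t) (by positivity)).ne).2
      exact measure_mono (Metric.ball_subset_ball (Real.sqrt_le_sqrt hta))
    have hnum : C₀ * Real.exp (-c₀ * (dist x y) ^ 2 / t)
        ≤ C₀ * Real.exp (-(γ * (dist x y) ^ 2)) := by
      apply mul_le_mul_of_nonneg_left _ hC₀.le
      apply Real.exp_le_exp.2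
      have hd2 : (0:ℝ) ≤ (dist x y) ^ 2 := sq_nonneg _
      have h1 : c₀ * dist x y ^ 2 / b ≤ c₀ * dist x y ^ 2 / t :=
        div_le_div_of_nonneg_left (by positivity) ht htb
      have e1 : -(γ * dist x y ^ 2) = -(c₀ * dist x y ^ 2 / b) := by rw [hγdef]; ring
      have e2 : -c₀ * dist x y ^ 2 / t = -(c₀ * dist x y ^ 2 / t) := by ring
      rw [e1, e2]
      linarith
    calc p t x y ≤ C₀ * Real.exp (-c₀ * (dist x y) ^ 2 / t) /
          (μ (Metric.ball x (Real.sqrt t))).toReal := hgauss t x y ht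
      _ ≤ C₀ * Real.exp (-(γ * (dist x y) ^ 2)) / (μ (Metric.ball x s)).toReal :=
          div_le_div₀ (by positivity) hnum (hden_pos x) hden_le
  have hbdd : ∀ x y : Y, BddAbove (Set.range fun t : Set.Icc a b => p t x y) := by
    intro x y
    refine ⟨C₀ * Real.exp (-(γ * (dist x y) ^ 2)) / (μ (Metric.ball x s)).toReal, ?_⟩
    rintro v ⟨t, rfl⟩
    exact hpt x y t
  have hsup : ∀ x y : Y, (⨆ t : Set.Icc a b, p t x y)
      ≤ C₀ * Real.exp (-(γ * (dist x y) ^ 2)) / (μ (Metric.ball x s)).toReal :=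
    fun x y => ciSup_le (hpt x y)
  have hsup_nn : ∀ x y : Y, 0 ≤ ⨆ t : Set.Icc a b, p t x y := fun x y =>
    le_trans (hnn a x y ha) (le_ciSup (hbdd x y) ⟨a, Set.left_mem_Icc.2 hab.le⟩)
  have hptwise : ∀ x y : Y, ENNReal.ofReal ((⨆ t : Set.Icc a b, p t x y) * ‖g y‖)
      ≤ K x y * ENNReal.ofReal (‖g y‖) := by
    intro x y
    rw [ENNReal.ofReal_mul (hsup_nn x y)]
    refine mul_le_mul_left ?_ _
    calc ENNReal.ofReal (⨆ t : Set.Icc a b, p t x y)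
        ≤ ENNReal.ofReal (C₀ * Real.exp (-(γ * (dist x y) ^ 2))
            / (μ (Metric.ball x s)).toReal) := ENNReal.ofReal_le_ofReal (hsup x y)
      _ = K x y := by
          rw [hKdef, ENNReal.ofReal_div_of_pos (hden_pos x),
            ENNReal.ofReal_toReal (hfin x s hs).ne]
  obtain ⟨g', hg'meas, hgg'⟩ : ∃ g' : Y → ℂ, StronglyMeasurable g' ∧ g =ᵐ[μ] g' :=
    ⟨hg.1.mk g, hg.1.stronglyMeasurable_mk, hg.1.ae_eq_mk⟩
  set h : Y → ENNReal := fun y => ENNReal.ofReal (‖g' y‖) with hhdef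
  have hhmeas : Measurable h := by
    apply Measurable.ennreal_ofReal
    exact continuous_norm.measurable.comp hg'meas.measurable
  have hae : (fun y => ENNReal.ofReal (‖g y‖)) =ᵐ[μ] h :=
    hgg'.mono fun y hy => by rw [hhdef]; simp only [hy]
  have hKx : ∀ y : Y, Measurable fun x => K x y := by
    intro y
    apply Measurable.div
    · apply Measurable.ennreal_ofReal
      apply Continuous.measurable
      fun_prop
    · exact meas_ball_meas μ s
  have hKmeas : Measurable (Function.uncurry fun x y => K x y * h y) := by
    have e : (Function.uncurry fun x y => K x y * h y)
        = fun q : Y × Y => (ENNReal.ofReal (C₀ * Real.exp (-(γ * (dist q.1 q.2) ^ 2)))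
            / μ (Metric.ball q.1 s)) * h q.2 := rfl
    rw [e]
    apply Measurable.mul
    · apply Measurable.div
      · apply Measurable.ennreal_ofReal
        apply Continuous.measurable
        fun_prop
      · exact (meas_ball_meas μ s).comp measurable_fst
    · exact hhmeas.comp measurable_snd
  have hint : Integrable (fun y => ‖g y‖) μ := by
    have := hg.norm
    simpa using this
  calc (∫⁻ x, ∫⁻ y, ENNReal.ofReal
          ((⨆ t : Set.Icc a b, p t x y) * ‖g y‖) ∂μ ∂μ)
      ≤ ∫⁻ x, ∫⁻ y, K x y * ENNReal.ofReal (‖g y‖) ∂μ ∂μ :=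
        lintegral_mono fun x => lintegral_mono fun y => hptwise x y
    _ = ∫⁻ x, ∫⁻ y, K x y * h y ∂μ ∂μ := by
        refine lintegral_congr fun x => lintegral_congr_ae (hae.mono fun y hy => by
          show K x y * ENNReal.ofReal (‖g y‖) = K x y * h y
          rw [show ENNReal.ofReal (‖g y‖) = h y from hy])
    _ = ∫⁻ y, ∫⁻ x, K x y * h y ∂μ ∂μ := lintegral_lintegral_swap hKmeas.aemeasurable
    _ = ∫⁻ y, (∫⁻ x, K x y ∂μ) * h y ∂μ :=
        lintegral_congr fun y => lintegral_mul_const'' _ (hKx y).aemeasurable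
    _ ≤ ∫⁻ y, ENNReal.ofReal C' * h y ∂μ :=
        lintegral_mono fun y => mul_le_mul_left (hC' y) _
    _ = ENNReal.ofReal C' * ∫⁻ y, h y ∂μ := lintegral_const_mul _ hhmeas
    _ = ENNReal.ofReal C' * ∫⁻ y, ENNReal.ofReal (‖g y‖) ∂μ := by
        rw [lintegral_congr_ae hae]
    _ = ENNReal.ofReal C' * ENNReal.ofReal (∫ y, ‖g y‖ ∂μ) := by
        rw [← ofReal_integral_eq_lintegral_ofReal hint
          (Filter.Eventually.of_forall fun y => norm_nonneg _)]
    _ = ENNReal.ofReal (C' * ∫ y, ‖g y‖ ∂μ) :=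
        (ENNReal.ofReal_mul hC'pos.le).symm
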